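/- arXiv:2003.08533 — 4 statements merged into one kernel-verified Lean document; each statement's English description precedes it below -/
import Mathlib

section
/- Let F be a family of subsets of α such that every equivalence class of r belongs to F (π* is realizable by F). Suppose v ∈ F, x ∈ v, v is pure, and no w ∈ F with v strictly contained in w is pure. Then v equals the equivalence class of x under r. (The largest pure node containing a given leaf, found by binary search, must be a block of the true partition π*.) -/
/-- Under realizability, a pure node `v ∋ x` with no pure strict superset in
`F` must equal the equivalence class of `x`. -/
theorem maximal_pure_is_block {α : Type*} (r : Setoid α) (F : Set (Set α))
    (hreal : ∀ x : α, {y | r.r x y} ∈ F)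
    (v : Set α) (hv : v ∈ F) (x : α) (hx : x ∈ v)
    (hpure : ∀ i ∈ v, ∀ j ∈ v, r.r i j)
    (hmax : ∀ w ∈ F, v ⊂ w → ¬ (∀ i ∈ w, ∀ j ∈ w, r.r i j)) :
    v = {y | r.r x y} := by
  have hsub : v ⊆ {y | r.r x y} := fun y hy => hpure x hx y hy
  by_contra hne
  have hss : v ⊂ {y | r.r x y} := ⟨hsub, fun h => hne (Set.Subset.antisymm hsub h)⟩
  exact hmax _ (hreal x) hss (fun i hi j hj => r.trans (r.symm hi) hj)
end

section
/- Let F be a family of subsets of α such that every equivalence class of r belongs to F (π* is realizable by F). Then a subset v ⊆ α is an equivalence class of r if and only if v ∈ F, v is nonempty, v is pure, and no w ∈ F strictly containing v is pure. (Under realizability, the blocks of the true partition π* are exactly the nonempty maximal pure members of the forest of input trees; this is the correctness guarantee behind Algorithm FindOneBlock in the noiseless case.) -/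
/-- Under realizability, the blocks of the true partition are exactly the
nonempty maximal pure members of `F`. -/
theorem blocks_iff_maximal_pure {α : Type*} (r : Setoid α) (F : Set (Set α))
    (hreal : ∀ x : α, {y | r.r x y} ∈ F) (v : Set α) :
    (∃ x : α, v = {y | r.r x y}) ↔
      (v ∈ F ∧ v.Nonempty ∧ (∀ i ∈ v, ∀ j ∈ v, r.r i j) ∧
        ∀ w ∈ F, v ⊂ w → ¬ (∀ i ∈ w, ∀ j ∈ w, r.r i j)) := by
  constructor
  · rintro ⟨x, rfl⟩
    refine ⟨hreal x, ⟨x, r.refl x⟩, ?_, ?_⟩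
    · intro i hi j hj
      exact r.trans (r.symm hi) hj
    · rintro w hw ⟨hsub, hne⟩ hpure
      obtain ⟨y, hyw, hyv⟩ := Set.not_subset.mp hne
      exact hyv (hpure x (hsub (r.refl x)) y hyw)
  · rintro ⟨hvF, ⟨x, hx⟩, hpure, hmax⟩
    refine ⟨x, ?_⟩
    have hsub : v ⊆ {y | r.r x y} := fun y hy => hpure x hx y hy
    by_contra hne
    exact hmax _ (hreal x) ⟨hsub, fun h => hne (Set.Subset.antisymm hsub h)⟩
      (fun i hi j hj => r.trans (r.symm hi) hj)
end

section
/- Let F be a laminar family of subsets of α. Let S be a nonempty pure subset of α, let B be the equivalence class of r containing S, and suppose S ≠ B and B ∈ F. Let v ∈ F satisfy S ⊊ v, with v minimal in the sense that there is no w ∈ F with S ⊊ w and w ⊊ v. Then v ⊆ B; in particular v is pure. (In Algorithm FindOneBlock, if the block containing the current pure set S is realized as a node of tree T_j and S is not itself a block, then the minimal extension of S in T_j is pure.) -/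
/-- If the block `B ⊇ S` is realized in the laminar family `F` and `S ≠ B`,
then the minimal extension `v` of `S` in `F` satisfies `v ⊆ B`; in
particular `v` is pure. -/
theorem minimal_extension_pure {α : Type*} (r : Setoid α) (F : Set (Set α))
    (hF : ∀ u ∈ F, ∀ v ∈ F, u ⊆ v ∨ v ⊆ u ∨ u ∩ v = ∅)
    (S : Set α) (hSne : S.Nonempty) (hSpure : ∀ i ∈ S, ∀ j ∈ S, r.r i j)
    (x : α) (hx : x ∈ S) (hSB : S ≠ {y | r.r x y})
    (hBF : {y | r.r x y} ∈ F)
    (v : Set α) (hv : v ∈ F) (hSv : S ⊂ v)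
    (hmin : ¬ ∃ w ∈ F, S ⊂ w ∧ w ⊂ v) :
    v ⊆ {y | r.r x y} ∧ ∀ i ∈ v, ∀ j ∈ v, r.r i j := by
  set B : Set α := {y | r.r x y} with hB
  have hSsubB : S ⊆ B := fun i hi => hSpure x hx i hi
  have hSB' : S ⊂ B := hSsubB.ssubset_of_ne hSB
  have hvB : v ⊆ B := by
    rcases hF v hv B hBF with h | h | h
    · exact h
    · rcases eq_or_ne B v with he | hne
      · exact he.ge
      · exact absurd ⟨B, hBF, hSB', h.ssubset_of_ne hne⟩ hmin
    · exact absurd (Set.eq_empty_iff_forall_notMem.mp h x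
        ⟨hSv.subset hx, r.refl x⟩) (fun h => h)
  refine ⟨hvB, fun i hi j hj => ?_⟩
  exact r.trans (r.symm (hvB hi)) (hvB hj)
end

section
/- Let F_1, …, F_r be laminar families of subsets of α such that every equivalence class of r belongs to F_1 ∪ … ∪ F_r (π* is realizable by the union of the trees). Let S be a nonempty pure subset of α that is strictly contained in its equivalence class under r. For each j ∈ {1, …, r}, let v_j ∈ F_j satisfy S ⊊ v_j, with v_j minimal in the sense that there is no w ∈ F_j with S ⊊ w and w ⊊ v_j. Then there exists j such that v_j is pure. (This is the claim m ≥ 1 in the proof of the Proposition: at least one of the minimal extensions of S across the input trees is pure, so Algorithm FindOneBlock never gets stuck.) -/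
/-- If the true partition is realizable by the union of laminar families
`F 1, …, F k`, `S` is a nonempty pure set strictly contained in its block,
and `v j` is a minimal extension of `S` in `F j` for each `j`, then at least
one `v j` is pure (the claim `m ≥ 1` in the proof of the Proposition). -/
theorem exists_pure_minimal_extension {α : Type*} {k : ℕ} (r : Setoid α)
    (F : Fin k → Set (Set α))
    (hlam : ∀ j, ∀ u ∈ F j, ∀ v ∈ F j, u ⊆ v ∨ v ⊆ u ∨ u ∩ v = ∅)
    (hreal : ∀ x : α, ∃ j, {y | r.r x y} ∈ F j)
    (S : Set α) (hSne : S.Nonempty) (hSpure : ∀ i ∈ S, ∀ j ∈ S, r.r i j)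
    (x : α) (hx : x ∈ S) (hSB : S ⊂ {y | r.r x y})
    (v : Fin k → Set α) (hv : ∀ j, v j ∈ F j) (hSv : ∀ j, S ⊂ v j)
    (hmin : ∀ j, ¬ ∃ w ∈ F j, S ⊂ w ∧ w ⊂ v j) :
    ∃ j, ∀ a ∈ v j, ∀ b ∈ v j, r.r a b := by
  obtain ⟨j, hBj⟩ := hreal x
  refine ⟨j, ?_⟩
  have hSsub : S ⊆ {y | r.r x y} := fun s hs => hSpure x hx s hs
  rcases hlam j _ (hv j) _ hBj with h | h | h
  · intro a ha b hb
    exact r.trans (r.symm (h ha)) (h hb)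
  · rcases eq_or_ssubset_of_subset h with heq | hss
    · intro a ha b hb
      rw [← heq] at ha hb
      exact r.trans (r.symm ha) hb
    · exact absurd ⟨_, hBj, hSB, hss⟩ (hmin j)
  · obtain ⟨s, hs⟩ := hSne
    exact absurd (Set.mem_inter ((hSv j).subset hs) (hSsub hs)) (by simp [h])
end
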